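/- For each positive integer m, there exists r ∈ {0, 1, 2, 3, 4} such that m − r = 3·s^{-1}(m) + 2·φ(m), where s^{-1}(m) = max{n : s(n) ≤ m} and φ(m) is the sum of the μ-digits of m. -/

import Mathlib

/-- `Alist k` is the list `A_{k+1}`: `A_1 = [5]`, `A_{k+1} = A_k ++ A_k ++ [1]`. -/
def Alist : ℕ → List ℕ
  | 0 => [5]
  | k+1 => Alist k ++ Alist k ++ [1]

/-- `aseq n` is the `n`-th term (1-indexed) of the limit of the lists `A_k`;
`aseq 0 = 0` by convention. -/
def aseq (n : ℕ) : ℕ := (Alist n).getD (n - 1) 0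

/-- Partial sums: `s n = a_1 + ⋯ + a_n`, `s 0 = 0`. -/
def s (n : ℕ) : ℕ := ∑ i ∈ Finset.Icc 1 n, aseq i

/-- `μ_i = 2^{i+1} + 2^i - 1`. -/
def mu (i : ℕ) : ℕ := 2 ^ (i + 1) + 2 ^ i - 1

/-- The largest `ℓ ≥ 1` with `μ_ℓ ≤ n` (`0` if there is none). -/
def maxMu (n : ℕ) : ℕ := Nat.findGreatest (fun ℓ => 0 < ℓ ∧ mu ℓ ≤ n) n

/-- `mudig n i` is the digit `ε_i` in the greedy μ-expansion
`n = r + ε_1·μ_1 + ⋯ + ε_ℓ·μ_ℓ` with `r ∈ {0,…,4}`. -/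
def mudig (n : ℕ) : ℕ → ℕ :=
  if _h : n ≤ 4 then fun _ => 0
  else
    let ℓ := maxMu n
    let r := n - mu ℓ
    if r = mu ℓ then fun i => if i = ℓ then 2 else 0
    else fun i => (if i = ℓ then 1 else 0) + mudig r i
termination_by n
decreasing_by
  have h1 : 1 ≤ maxMu n :=
    Nat.le_findGreatest (by omega) ⟨one_pos, by simp [mu]; omega⟩
  have h2 : 2 ≤ 2 ^ maxMu n := by
    calc (2 : ℕ) = 2 ^ 1 := rfl
    _ ≤ 2 ^ maxMu n := Nat.pow_le_pow_right (by norm_num) h1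
  have : 5 ≤ mu (maxMu n) := by simp [mu]; omega
  omega

/-- Sum of the μ-digits of `m`. -/
def phi (m : ℕ) : ℕ := ∑ i ∈ Finset.Icc 1 m, mudig m i

/-- `s⁻¹(m) = max {n : s n ≤ m}` (all such `n` are at most `m` since `s n ≥ n`). -/
def sInv (m : ℕ) : ℕ := Nat.findGreatest (fun n => s n ≤ m) m

/-! Since `A_{ℓ+1} = A_ℓ ++ A_ℓ ++ [1]` with `|A_ℓ| = 2^ℓ - 1` and `sum A_ℓ = μ_ℓ`, we have
`s (2^ℓ - 1 + j) = μ_ℓ + s j` for `j ≤ 2^ℓ - 1`. Peeling the greedy μ-digits off `m` one at a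
time therefore produces `n = ∑ εᵢ (2^i - 1)` with `s n = ∑ εᵢ μᵢ = m - r ≤ m < s (n + 1)`, so
`n = s⁻¹(m)`; and `μᵢ = 3 (2^i - 1) + 2` turns `s n = ∑ εᵢ μᵢ` into `3 n + 2 φ(m)`. -/

lemma length_Alist (k : ℕ) : (Alist k).length = 2 ^ (k + 1) - 1 := by
  induction k with
  | zero => rfl
  | succ k ih =>
    have : 1 ≤ 2 ^ (k + 1) := Nat.one_le_two_pow
    simp only [Alist, List.length_append, ih, List.length_singleton, pow_succ]
    omega

lemma pos_of_mem_Alist {k x : ℕ} (hx : x ∈ Alist k) : 0 < x := by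
  induction k with
  | zero => simp_all [Alist]
  | succ k ih =>
    simp only [Alist, List.mem_append, List.mem_singleton] at hx
    rcases hx with (hx | hx) | rfl
    exacts [ih hx, ih hx, one_pos]

lemma sum_Alist (k : ℕ) : (Alist k).sum = mu (k + 1) := by
  induction k with
  | zero => rfl
  | succ k ih =>
    simp only [Alist, List.sum_append, ih, List.sum_singleton, mu, pow_succ]
    have : 1 ≤ 2 ^ k := Nat.one_le_two_pow
    omega

lemma Alist_prefix_of_le {k k' : ℕ} (h : k ≤ k') : Alist k <+: Alist k' := by
  induction k', h using Nat.le_induction with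
  | base => exact List.prefix_refl _
  | succ k' _ ih => exact ih.trans ⟨Alist k' ++ [1], by simp [Alist]⟩

lemma getD_Alist_of_le {k k' i : ℕ} (h : k ≤ k') (hi : i < (Alist k).length) :
    (Alist k').getD i 0 = (Alist k).getD i 0 := by
  obtain ⟨t, ht⟩ := Alist_prefix_of_le h
  rw [← ht, List.getD_append _ _ _ _ hi]

lemma lt_length_Alist (n : ℕ) : n < (Alist n).length := by
  rw [length_Alist]
  have := Nat.lt_two_pow_self (n := n + 1)
  omega

lemma aseq_succ_eq_getD {n k : ℕ} (hn : n < (Alist k).length) :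
    aseq (n + 1) = (Alist k).getD n 0 := by
  change (Alist (n + 1)).getD n 0 = _
  rcases le_total k (n + 1) with h | h
  · exact getD_Alist_of_le h hn
  · exact (getD_Alist_of_le h ((lt_length_Alist n).trans_le
      (Alist_prefix_of_le n.le_succ).length_le)).symm

@[simp]
lemma s_zero : s 0 = 0 := rfl

lemma s_succ (n : ℕ) : s (n + 1) = s n + aseq (n + 1) :=
  Finset.sum_Icc_succ_top (Nat.le_add_left 1 n) aseq

lemma aseq_succ_pos (n : ℕ) : 0 < aseq (n + 1) := by
  have hn := lt_length_Alist n
  rw [aseq_succ_eq_getD hn, List.getD_eq_getElem _ _ hn]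
  exact pos_of_mem_Alist (List.getElem_mem hn)

lemma s_strictMono : StrictMono s :=
  strictMono_nat_of_lt_succ fun n => by
    rw [s_succ]
    exact Nat.lt_add_of_pos_right (aseq_succ_pos n)

lemma s_eq_sum_take {n k : ℕ} (hn : n ≤ (Alist k).length) : s n = ((Alist k).take n).sum := by
  induction n with
  | zero => rfl
  | succ n ih =>
    rw [s_succ, ih (by omega), aseq_succ_eq_getD hn, List.getD_eq_getElem _ _ hn,
      List.sum_take_succ]

lemma s_two_pow_sub_one_add {ℓ j : ℕ} (hℓ : 0 < ℓ) (hj : j ≤ 2 ^ ℓ - 1) :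
    s (2 ^ ℓ - 1 + j) = mu ℓ + s j := by
  obtain ⟨k, rfl⟩ : ∃ k, ℓ = k + 1 := ⟨ℓ - 1, by omega⟩
  have hlen := length_Alist k
  have hlen' := length_Alist (k + 1)
  rw [pow_succ] at hlen'
  rw [s_eq_sum_take (k := k + 1) (by omega), s_eq_sum_take (k := k) (by omega), ← hlen,
    Alist, List.append_assoc, List.take_length_add_append, List.sum_append, sum_Alist,
    List.take_append_of_le_length (by omega)]

lemma s_two_pow_sub_one {ℓ : ℕ} (hℓ : 0 < ℓ) : s (2 ^ ℓ - 1) = mu ℓ := by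
  simpa using s_two_pow_sub_one_add hℓ (Nat.zero_le _)

lemma mu_eq_three_mul_add_two (i : ℕ) : mu i = 3 * (2 ^ i - 1) + 2 := by
  have : 1 ≤ 2 ^ i := Nat.one_le_two_pow
  rw [mu, pow_succ]
  omega

lemma mu_succ (i : ℕ) : mu (i + 1) = 2 * mu i + 1 := by
  rw [mu_eq_three_mul_add_two, mu_eq_three_mul_add_two, pow_succ]
  have : 1 ≤ 2 ^ i := Nat.one_le_two_pow
  omega

lemma five_le_mu {i : ℕ} (hi : 0 < i) : 5 ≤ mu i := by
  have := Nat.one_lt_two_pow hi.ne'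
  rw [mu_eq_three_mul_add_two]
  omega

lemma maxMu_le (n : ℕ) : maxMu n ≤ n := Nat.findGreatest_le n

lemma maxMu_spec {n : ℕ} (hn : 5 ≤ n) :
    0 < maxMu n ∧ mu (maxMu n) ≤ n ∧ n < mu (maxMu n + 1) := by
  obtain ⟨hpos, hle⟩ : 0 < maxMu n ∧ mu (maxMu n) ≤ n :=
    Nat.findGreatest_spec (m := 1) (P := fun ℓ => 0 < ℓ ∧ mu ℓ ≤ n) (by omega) ⟨one_pos, hn⟩
  refine ⟨hpos, hle, ?_⟩
  by_contra! hgt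
  rcases (maxMu_le n).lt_or_eq with hlt | heq
  · exact Nat.findGreatest_is_greatest (Nat.lt_succ_self _) hlt ⟨Nat.succ_pos _, hgt⟩
  · have := Nat.lt_two_pow_self (n := n)
    rw [heq, mu_eq_three_mul_add_two, pow_succ] at hgt
    omega

lemma mudig_of_le_four {n : ℕ} (hn : n ≤ 4) (i : ℕ) : mudig n i = 0 := by
  rw [mudig, dif_pos hn]

lemma mudig_of_lt {n i : ℕ} (h : n < i) : mudig n i = 0 := by
  induction n using Nat.strong_induction_on generalizing i with
  | _ n ih =>
    rcases le_or_gt n 4 with h4 | h4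
    · exact mudig_of_le_four h4 i
    obtain ⟨hpos, -, -⟩ := maxMu_spec h4
    have hne : i ≠ maxMu n := (h.trans_le' (maxMu_le n)).ne'
    rw [mudig, dif_neg (by omega)]
    split
    · simp [hne]
    · have := five_le_mu hpos
      simp [hne, ih _ (by omega) (by omega : n - mu (maxMu n) < i)]

lemma phi_eq_sum_of_le {m N : ℕ} (h : m ≤ N) : phi m = ∑ i ∈ Finset.Icc 1 N, mudig m i :=
  Finset.sum_subset (Finset.Icc_subset_Icc_right h) fun i hi hni => mudig_of_lt (by simp_all)

lemma phi_of_le_four {m : ℕ} (hm : m ≤ 4) : phi m = 0 :=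
  Finset.sum_eq_zero fun i _ => mudig_of_le_four hm i

lemma phi_of_sub_mu_eq {m ℓ : ℕ} (hm : 5 ≤ m) (hℓ : maxMu m = ℓ) (h : m - mu ℓ = mu ℓ) :
    phi m = 2 := by
  subst hℓ
  have hdig : mudig m = fun i => if i = maxMu m then 2 else 0 := by
    rw [mudig, dif_neg (by omega)]
    exact if_pos h
  rw [phi, hdig, Finset.sum_ite_eq']
  simp [(maxMu_spec hm).1.ne', maxMu_le m, Nat.one_le_iff_ne_zero]

lemma phi_of_sub_mu_ne {m ℓ : ℕ} (hm : 5 ≤ m) (hℓ : maxMu m = ℓ) (h : m - mu ℓ ≠ mu ℓ) :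
    phi m = 1 + phi (m - mu ℓ) := by
  subst hℓ
  have hdig : mudig m =
      fun i => (if i = maxMu m then 1 else 0) + mudig (m - mu (maxMu m)) i := by
    rw [mudig, dif_neg (by omega)]
    exact if_neg h
  rw [phi, hdig, Finset.sum_add_distrib, Finset.sum_ite_eq', phi_eq_sum_of_le (Nat.sub_le m _)]
  simp [(maxMu_spec hm).1.ne', maxMu_le m, Nat.one_le_iff_ne_zero]

theorem exists_s_le_lt_s_succ (m : ℕ) :
    ∃ n, s n ≤ m ∧ m < s (n + 1) ∧ m - s n ≤ 4 ∧ s n = 3 * n + 2 * phi m := by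
  induction m using Nat.strong_induction_on with
  | _ m ih =>
  rcases le_or_gt m 4 with hm | hm
  · exact ⟨0, by simp, by rw [show s 1 = 5 from rfl]; omega, by simpa using hm,
      by simp [phi_of_le_four hm]⟩
  obtain ⟨ℓ, hℓdef⟩ : ∃ ℓ, maxMu m = ℓ := ⟨_, rfl⟩
  obtain ⟨hℓ, hle, hlt⟩ := hℓdef ▸ maxMu_spec hm
  have hsℓ : s (2 ^ ℓ - 1) = mu ℓ := s_two_pow_sub_one hℓ
  have hsℓ1 : s (2 ^ (ℓ + 1) - 1) = mu (ℓ + 1) := s_two_pow_sub_one ℓ.succ_pos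
  have hmu := mu_eq_three_mul_add_two ℓ
  have hmu1 := mu_succ ℓ
  by_cases hr : m - mu ℓ = mu ℓ
  · have hdouble : 2 ^ (ℓ + 1) - 1 = 2 ^ ℓ - 1 + (2 ^ ℓ - 1) + 1 := by
      have : 1 ≤ 2 ^ ℓ := Nat.one_le_two_pow
      rw [pow_succ]
      omega
    refine ⟨2 ^ ℓ - 1 + (2 ^ ℓ - 1), ?_⟩
    rw [s_two_pow_sub_one_add hℓ le_rfl, hsℓ, phi_of_sub_mu_eq hm hℓdef hr, ← hdouble, hsℓ1]
    omega
  · obtain ⟨n, hsn, hsn1, hrem, hphi⟩ := ih (m - mu ℓ) (by have := five_le_mu hℓ; omega)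
    have hn : n < 2 ^ ℓ - 1 := s_strictMono.lt_iff_lt.mp (by omega)
    have hs : s (2 ^ ℓ - 1 + n) = mu ℓ + s n := s_two_pow_sub_one_add hℓ hn.le
    have hs1 : s (2 ^ ℓ - 1 + n + 1) = mu ℓ + s (n + 1) := s_two_pow_sub_one_add hℓ hn
    refine ⟨2 ^ ℓ - 1 + n, ?_⟩
    rw [hs, hs1, phi_of_sub_mu_ne hm hℓdef hr]
    omega

lemma sInv_eq_of_s_le_of_lt {m n : ℕ} (h₁ : s n ≤ m) (h₂ : m < s (n + 1)) : sInv m = n :=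
  Nat.findGreatest_eq_iff.mpr ⟨(s_strictMono.id_le n).trans h₁, fun _ => h₁,
    fun _ hk _ hsk => (h₂.trans_le (s_strictMono.monotone hk)).not_ge hsk⟩

theorem s_inverse_formula_general (m : ℕ) :
    ∃ r : ℕ, r ≤ 4 ∧ m = 3 * sInv m + 2 * phi m + r := by
  obtain ⟨n, hsn, hsn1, hrem, hphi⟩ := exists_s_le_lt_s_succ m
  exact ⟨m - s n, hrem, by rw [sInv_eq_of_s_le_of_lt hsn hsn1]; omega⟩

/-- For each positive integer `m`, there is `r ∈ {0,1,2,3,4}` with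
`m − r = 3·s⁻¹(m) + 2·φ(m)`, where `s⁻¹(m) = max{n : s(n) ≤ m}` and `φ(m)` is
the sum of the μ-digits of `m`. -/
theorem s_inverse_formula (m : ℕ) (hm : 1 ≤ m) :
    ∃ r : ℕ, r ≤ 4 ∧ m = 3 * sInv m + 2 * phi m + r :=
  s_inverse_formula_general m
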